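/- arXiv:gr-qc/9405063 — 3 statements merged into one kernel-verified Lean document; each statement's English description precedes it below -/
import Mathlib

section
/- Sequence criterion for covering: B covers B' if and only if for every sequence (pᵢ) of points of M such that (φ'(pᵢ)) has a limit point in B', the sequence (φ(pᵢ)) has a limit point in B. (Assume M̂ and M̂' are metrizable, e.g. second-countable manifolds.) -/
open Set Filter Topology

/-- Boundary set `B` of the envelopment `φ` covers boundary set `B'` of the
envelopment `φ'`. -/
def Covers {M MHat MHat' : Type*} [TopologicalSpace MHat] [TopologicalSpace MHat']
    (φ : M → MHat) (φ' : M → MHat') (B : Set MHat) (B' : Set MHat') : Prop :=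
  ∀ U : Set MHat, IsOpen U → B ⊆ U →
    ∃ U' : Set MHat', IsOpen U' ∧ B' ⊆ U' ∧
      φ '' (φ' ⁻¹' (U' ∩ Set.range φ')) ⊆ U

/-- Sequence criterion for covering: `B` covers `B'` iff for every sequence
`(pᵢ)` of points of `M` such that `(φ'(pᵢ))` has a limit point (limit of a
subsequence) in `B'`, the sequence `(φ(pᵢ))` has a limit point in `B`.
(`M̂` and `M̂'` are assumed metrizable and `B` closed.) -/
theorem covers_iff_sequence_criterion
    {M MHat MHat' : Type*} [TopologicalSpace M]
    [TopologicalSpace MHat] [TopologicalSpace MHat']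
    [TopologicalSpace.MetrizableSpace MHat] [TopologicalSpace.MetrizableSpace MHat']
    (φ : M → MHat) (φ' : M → MHat')
    (hφ : IsEmbedding φ) (hφ' : IsEmbedding φ')
    (hoφ : IsOpen (Set.range φ)) (hoφ' : IsOpen (Set.range φ'))
    (B : Set MHat) (B' : Set MHat')
    (hB : B ⊆ closure (Set.range φ) \ Set.range φ) (hBcl : IsClosed B)
    (hB' : B' ⊆ closure (Set.range φ') \ Set.range φ') :
    Covers φ φ' B B' ↔
      ∀ p : ℕ → M,
        (∃ q' ∈ B', ∃ s : ℕ → ℕ, StrictMono s ∧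
            Tendsto (fun i => φ' (p (s i))) atTop (𝓝 q')) →
        ∃ q ∈ B, ∃ s : ℕ → ℕ, StrictMono s ∧
            Tendsto (fun i => φ (p (s i))) atTop (𝓝 q) := by
  letI : TopologicalSpace.PseudoMetrizableSpace MHat :=
    TopologicalSpace.MetrizableSpace.toPseudoMetrizableSpace
  letI : TopologicalSpace.PseudoMetrizableSpace MHat' :=
    TopologicalSpace.MetrizableSpace.toPseudoMetrizableSpace
  constructor
  · -- Covers → sequence criterion
    rintro hcov p ⟨q', hq'B', s, hsmono, hlim⟩
    by_contra hnot
    push_neg at hnot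
    set x : ℕ → MHat := fun i => φ (p (s i)) with hx
    -- `B` is disjoint from the closure of the range of `x`
    have hdisj : ∀ b ∈ B, b ∉ closure (Set.range x) := by
      intro b hb hbcl
      have hbr : ∀ i, b ≠ x i := fun i h => (hB hb).2 ⟨p (s i), h.symm⟩
      -- `b` lies in the closure of every tail of `x`
      have htail : ∀ n, b ∈ closure (x '' Set.Ici n) := by
        intro n
        have hsplit : Set.range x = x '' Set.Iio n ∪ x '' Set.Ici n := by
          rw [← Set.image_union]
          have : Set.Iio n ∪ Set.Ici n = Set.univ := Set.Iio_union_Ici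
          rw [this, Set.image_univ]
        rw [hsplit, closure_union] at hbcl
        rcases hbcl with h | h
        · exfalso
          have hfin : (x '' Set.Iio n).Finite := (Set.finite_Iio n).image x
          rw [hfin.isClosed.closure_eq] at h
          obtain ⟨i, _, hi⟩ := h
          exact hbr i hi.symm
        · exact h
      have hclust : MapClusterPt b atTop x := by
        rw [mapClusterPt_iff_frequently]
        intro V hV
        rw [Filter.frequently_atTop]
        intro n
        obtain ⟨y, hyV, hyT⟩ := mem_closure_iff_nhds.mp (htail n) V hV
        obtain ⟨i, hi, rfl⟩ := hyT
        exact ⟨i, hi, hyV⟩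
      obtain ⟨t, htmono, htt⟩ :=
        TopologicalSpace.FirstCountableTopology.tendsto_subseq hclust
      exact hnot b hb (s ∘ t) (hsmono.comp htmono) htt
    -- apply `Covers` to the complement of the closure of the range of `x`
    obtain ⟨U', hU'open, hB'U', hU'sub⟩ :=
      hcov (closure (Set.range x))ᶜ isClosed_closure.isOpen_compl
        (fun b hb => hdisj b hb)
    have hev : ∀ᶠ i in atTop, φ' (p (s i)) ∈ U' :=
      hlim.eventually_mem (hU'open.mem_nhds (hB'U' hq'B'))
    obtain ⟨i, hi⟩ := hev.exists
    have : x i ∈ (closure (Set.range x))ᶜ :=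
      hU'sub ⟨p (s i), ⟨hi, ⟨p (s i), rfl⟩⟩, rfl⟩
    exact this (subset_closure ⟨i, rfl⟩)
  · -- sequence criterion → Covers
    intro hseq U hUopen hBU
    set Bad : Set MHat' := φ' '' {m | φ m ∉ U} with hBad
    by_cases hcase : B' ⊆ (closure Bad)ᶜ
    · refine ⟨(closure Bad)ᶜ, isClosed_closure.isOpen_compl, hcase, ?_⟩
      rintro _ ⟨m, ⟨hmU', _⟩, rfl⟩
      by_contra hmU
      exact hmU' (subset_closure ⟨m, hmU, rfl⟩)
    · exfalso
      obtain ⟨q', hq'B', hq'cl⟩ : ∃ q' ∈ B', q' ∈ closure Bad := by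
        simp only [Set.subset_def, Set.mem_compl_iff, not_forall, not_not] at hcase
        obtain ⟨q', hq'B', hq'⟩ := hcase
        exact ⟨q', hq'B', hq'⟩
      obtain ⟨y, hy, hytend⟩ := mem_closure_iff_seq_limit.mp hq'cl
      choose pfun hpU hpy using hy
      have hcrit : ∃ q' ∈ B', ∃ s : ℕ → ℕ, StrictMono s ∧
          Tendsto (fun i => φ' (pfun (s i))) atTop (𝓝 q') := by
        refine ⟨q', hq'B', id, strictMono_id, ?_⟩
        simpa only [id_eq, hpy] using hytend
      obtain ⟨q, hqB, t, htmono, httend⟩ := hseq pfun hcrit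
      have hev : ∀ᶠ i in atTop, φ (pfun (t i)) ∈ U :=
        httend.eventually_mem (hUopen.mem_nhds (hBU hqB))
      obtain ⟨i, hi⟩ := hev.exists
      exact hpU (t i) hi
end

section
/- In ℝⁿ with origin removed, M = ℝⁿ \ {0}: under the envelopments φ = identity inclusion M → ℝⁿ and φ'(x) = ((r+1)/r)·x where r = |x|, the singleton boundary set {0} of φ covers the unit sphere S^{n-1} = {x : |x| = 1}, which is a boundary set of φ'. -/
open Set Topology Metric

theorem norm_add_one_div_norm_smul {E : Type*} [NormedAddCommGroup E] [NormedSpace ℝ E]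
    {x : E} (hx : x ≠ 0) : ‖((‖x‖ + 1) / ‖x‖) • x‖ = ‖x‖ + 1 := by
  have hr : 0 < ‖x‖ := norm_pos_iff.mpr hx
  rw [norm_smul, Real.norm_of_nonneg (by positivity)]
  field_simp

/-- The second envelopment adds `1` to the norm, so the `(1 + ε)`-ball around the unit sphere
pulls back into the `ε`-ball around the origin. -/
theorem covers_origin_unitSphere {E : Type*} [NormedAddCommGroup E] [NormedSpace ℝ E] :
    Covers (fun x : {x : E // x ≠ 0} => (x : E))
      (fun x => ((‖(x : E)‖ + 1) / ‖(x : E)‖) • (x : E)) {0} (sphere 0 1) := by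
  intro U hU h0U
  obtain ⟨ε, hε, hball⟩ := Metric.isOpen_iff.mp hU 0 (h0U rfl)
  refine ⟨ball 0 (1 + ε), isOpen_ball, fun y hy => ?_, ?_⟩
  · rw [mem_sphere_zero_iff_norm] at hy
    rw [mem_ball_zero_iff, hy]
    linarith
  · rintro _ ⟨x, ⟨hx, -⟩, rfl⟩
    apply hball
    have hx' : ‖(x : E)‖ + 1 < 1 + ε := by
      rwa [mem_ball_zero_iff, norm_add_one_div_norm_smul x.2] at hx
    rw [mem_ball_zero_iff]
    linarith

theorem origin_covers_unit_sphere_general (n : ℕ) :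
    let E := EuclideanSpace ℝ (Fin n)
    let M := {x : E // x ≠ 0}
    let φ : M → E := fun x => (x : E)
    let φ' : M → E := fun x => ((‖(x : E)‖ + 1) / ‖(x : E)‖) • (x : E)
    Covers φ φ' ({(0 : E)} : Set E) (Metric.sphere (0 : E) 1) :=
  covers_origin_unitSphere

/-- `M = ℝⁿ \ {0}`: under the envelopments `φ = inclusion` and
`φ'(x) = ((|x|+1)/|x|)·x`, the singleton boundary set `{0}` of `φ` covers the
unit sphere `S^{n-1}`, a boundary set of `φ'`. -/
theorem origin_covers_unit_sphere (n : ℕ) (hn : 1 ≤ n) :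
    let E := EuclideanSpace ℝ (Fin n)
    let M := {x : E // x ≠ 0}
    let φ : M → E := fun x => (x : E)
    let φ' : M → E := fun x => ((‖(x : E)‖ + 1) / ‖(x : E)‖) • (x : E)
    Covers φ φ' ({(0 : E)} : Set E) (Metric.sphere (0 : E) 1) :=
  origin_covers_unit_sphere_general n
end

section
/- In the upper half-plane M = {(x,y) ∈ ℝ² : y > 0} with metric ds² = y²dx² + dy², the image of every maximal geodesic of this metric other than the vertical lines x = const is contained in a set of the form {(x, y) : y = α sec(x - x₀), |x - x₀| < π/2} for some α > 0 and x₀ ∈ ℝ. In particular, a geodesic whose image is not a vertical line has y-coordinate bounded below by α > 0 and hence does not approach the boundary y = 0. -/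
open Set Filter Topology Real

/-- A function with zero derivative on a convex set is constant there. -/
lemma aux_const_of_deriv_zero {f : ℝ → ℝ} {I : Set ℝ} (hconv : Convex ℝ I)
    (hIopen : IsOpen I) (hf : ∀ t ∈ I, HasDerivAt f 0 t) :
    ∀ a ∈ I, ∀ b ∈ I, f a = f b := by
  intro a ha b hb
  refine hconv.is_const_of_fderivWithin_eq_zero
    (fun t ht => ((hf t ht).differentiableAt).differentiableWithinAt) (fun t ht => ?_) ha hb
  have h1 : HasFDerivAt f ((1 : ℝ →L[ℝ] ℝ).smulRight (0 : ℝ)) t := (hf t ht).hasFDerivAt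
  have h2 := (h1.hasFDerivWithinAt (s := I)).fderivWithin (hIopen.uniqueDiffOn t ht)
  rw [h2]
  ext; simp

/-- Existence of an angle with prescribed cosine and sine. -/
lemma aux_exists_angle (c s : ℝ) (h : c ^ 2 + s ^ 2 = 1) :
    ∃ θ : ℝ, Real.cos θ = c ∧ Real.sin θ = s := by
  rcases le_or_gt 0 s with hs | hs
  · refine ⟨Real.arccos c, Real.cos_arccos (by nlinarith) (by nlinarith), ?_⟩
    rw [Real.sin_arccos]
    have : 1 - c ^ 2 = s ^ 2 := by linarith
    rw [this, Real.sqrt_sq hs]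
  · refine ⟨-Real.arccos c, by rw [Real.cos_neg, Real.cos_arccos (by nlinarith) (by nlinarith)], ?_⟩
    rw [Real.sin_neg, Real.sin_arccos]
    have : 1 - c ^ 2 = s ^ 2 := by linarith
    rw [this, Real.sqrt_sq_eq_abs, abs_of_neg hs, neg_neg]

/-- For `θ ∈ [-π, π)` with positive cosine, `|θ| < π/2`. -/
lemma aux_abs_lt_of_cos_pos {θ : ℝ} (h1 : -π ≤ θ) (h2 : θ < π) (h3 : 0 < Real.cos θ) :
    |θ| < π / 2 := by
  rw [abs_lt]
  constructor
  · by_contra h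
    push_neg at h
    have : Real.cos (-θ) ≤ 0 :=
      Real.cos_nonpos_of_pi_div_two_le_of_le (by linarith) (by linarith)
    rw [Real.cos_neg] at this; linarith
  · by_contra h
    push_neg at h
    have : Real.cos θ ≤ 0 :=
      Real.cos_nonpos_of_pi_div_two_le_of_le (by linarith) (by linarith)
    linarith

/-- In the upper half-plane `{y > 0}` with metric `ds² = y²dx² + dy²`, the
geodesic equations for the Levi-Civita connection are
`x'' + (2/y) x' y' = 0` and `y'' - y (x')² = 0`.  Every geodesic defined on an
(order-connected, nonempty, open) interval `I` whose image is not contained in a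
vertical line `x = const` has image contained in a set
`{(x, y) : y = α sec(x - x₀), |x - x₀| < π/2}` for some `α > 0`, `x₀ ∈ ℝ`;
in particular its `y`-coordinate is bounded below by `α > 0`, so it does not
approach the boundary `y = 0`. -/
theorem cone_cover_geodesics_sec
    (x y : ℝ → ℝ) (I : Set ℝ) (hIopen : IsOpen I) (hIne : I.Nonempty)
    (hIconn : I.OrdConnected)
    (hx2 : ContDiffOn ℝ 2 x I) (hy2 : ContDiffOn ℝ 2 y I)
    (hypos : ∀ t ∈ I, 0 < y t)
    (hgeo1 : ∀ t ∈ I, deriv (deriv x) t + (2 / y t) * deriv x t * deriv y t = 0)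
    (hgeo2 : ∀ t ∈ I, deriv (deriv y) t - y t * (deriv x t) ^ 2 = 0)
    (hreg : ∀ t ∈ I, (deriv x t, deriv y t) ≠ (0, 0))
    (hnonvert : ∃ t₁ ∈ I, ∃ t₂ ∈ I, x t₁ ≠ x t₂) :
    ∃ α > (0 : ℝ), ∃ x₀ : ℝ, ∀ t ∈ I,
      |x t - x₀| < π / 2 ∧ y t = α / Real.cos (x t - x₀) ∧ α ≤ y t := by
  obtain ⟨t₀, ht₀⟩ := hIne
  have hconv : Convex ℝ I := convex_iff_ordConnected.mpr hIconn
  -- basic differentiability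
  have hxd : ∀ t ∈ I, HasDerivAt x (deriv x t) t := fun t ht =>
    ((hx2.differentiableOn (by norm_num)).differentiableAt (hIopen.mem_nhds ht)).hasDerivAt
  have hyd : ∀ t ∈ I, HasDerivAt y (deriv y t) t := fun t ht =>
    ((hy2.differentiableOn (by norm_num)).differentiableAt (hIopen.mem_nhds ht)).hasDerivAt
  have hx1 : ContDiffOn ℝ 1 (deriv x) I := hx2.deriv_of_isOpen hIopen (by norm_num)
  have hy1 : ContDiffOn ℝ 1 (deriv y) I := hy2.deriv_of_isOpen hIopen (by norm_num)
  have hud : ∀ t ∈ I, HasDerivAt (deriv x) (deriv (deriv x) t) t := fun t ht =>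
    ((hx1.differentiableOn (by norm_num)).differentiableAt (hIopen.mem_nhds ht)).hasDerivAt
  have hvd : ∀ t ∈ I, HasDerivAt (deriv y) (deriv (deriv y) t) t := fun t ht =>
    ((hy1.differentiableOn (by norm_num)).differentiableAt (hIopen.mem_nhds ht)).hasDerivAt
  -- the Cartesian coordinates F = y cos x, G = y sin x, and their derivatives
  set P : ℝ → ℝ := fun t => deriv y t * Real.cos (x t) - y t * Real.sin (x t) * deriv x t with hPdef
  set Q : ℝ → ℝ := fun t => deriv y t * Real.sin (x t) + y t * Real.cos (x t) * deriv x t with hQdef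
  have hcosd : ∀ t ∈ I, HasDerivAt (fun s => Real.cos (x s)) (-Real.sin (x t) * deriv x t) t :=
    fun t ht => (Real.hasDerivAt_cos (x t)).comp t (hxd t ht)
  have hsind : ∀ t ∈ I, HasDerivAt (fun s => Real.sin (x s)) (Real.cos (x t) * deriv x t) t :=
    fun t ht => (Real.hasDerivAt_sin (x t)).comp t (hxd t ht)
  have hF : ∀ t ∈ I, HasDerivAt (fun s => y s * Real.cos (x s)) (P t) t := by
    intro t ht
    have this : HasDerivAt (fun s => y s * Real.cos (x s)) (deriv y t * Real.cos (x t) + y t * (-Real.sin (x t) * deriv x t)) t := (hyd t ht).mul (hcosd t ht)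
    convert this using 1
    show deriv y t * Real.cos (x t) - y t * Real.sin (x t) * deriv x t = _
    ring
  have hG : ∀ t ∈ I, HasDerivAt (fun s => y s * Real.sin (x s)) (Q t) t := by
    intro t ht
    have this : HasDerivAt (fun s => y s * Real.sin (x s)) (deriv y t * Real.sin (x t) + y t * (Real.cos (x t) * deriv x t)) t := (hyd t ht).mul (hsind t ht)
    convert this using 1
    show deriv y t * Real.sin (x t) + y t * Real.cos (x t) * deriv x t = _
    ring
  have hyne : ∀ t ∈ I, y t ≠ 0 := fun t ht => (hypos t ht).ne'
  have hxpp : ∀ t ∈ I, deriv (deriv x) t = -(2 / y t) * deriv x t * deriv y t := by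
    intro t ht; have := hgeo1 t ht; linarith
  have hypp : ∀ t ∈ I, deriv (deriv y) t = y t * (deriv x t) ^ 2 := by
    intro t ht; have := hgeo2 t ht; linarith
  have hP0 : ∀ t ∈ I, HasDerivAt P 0 t := by
    intro t ht
    have hprod : HasDerivAt (fun s => y s * Real.sin (x s) * deriv x s)
        (Q t * deriv x t + y t * Real.sin (x t) * deriv (deriv x) t) t :=
      (hG t ht).mul (hud t ht)
    have h2 : HasDerivAt P
        ((deriv (deriv y) t * Real.cos (x t) + deriv y t * (-Real.sin (x t) * deriv x t)) -
          (Q t * deriv x t + y t * Real.sin (x t) * deriv (deriv x) t)) t :=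
      ((hvd t ht).mul (hcosd t ht)).sub hprod
    convert h2 using 1
    have hq' : Q t = deriv y t * Real.sin (x t) + y t * Real.cos (x t) * deriv x t := rfl
    rw [hxpp t ht, hypp t ht, hq']
    have hy := hyne t ht
    field_simp
    ring
  have hQ0 : ∀ t ∈ I, HasDerivAt Q 0 t := by
    intro t ht
    have hprod : HasDerivAt (fun s => y s * Real.cos (x s) * deriv x s)
        (P t * deriv x t + y t * Real.cos (x t) * deriv (deriv x) t) t :=
      (hF t ht).mul (hud t ht)
    have h2 : HasDerivAt Q
        ((deriv (deriv y) t * Real.sin (x t) + deriv y t * (Real.cos (x t) * deriv x t)) +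
          (P t * deriv x t + y t * Real.cos (x t) * deriv (deriv x) t)) t :=
      ((hvd t ht).mul (hsind t ht)).add hprod
    convert h2 using 1
    have hp' : P t = deriv y t * Real.cos (x t) - y t * Real.sin (x t) * deriv x t := rfl
    rw [hxpp t ht, hypp t ht, hp']
    have hy := hyne t ht
    field_simp
    ring
  -- P and Q are constant on I
  set p : ℝ := P t₀ with hpdef
  set q : ℝ := Q t₀ with hqdef
  have hPconst : ∀ t ∈ I, P t = p := fun t ht =>
    aux_const_of_deriv_zero hconv hIopen hP0 t ht t₀ ht₀
  have hQconst : ∀ t ∈ I, Q t = q := fun t ht =>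
    aux_const_of_deriv_zero hconv hIopen hQ0 t ht t₀ ht₀
  -- energy is positive
  have hEpos : 0 < p ^ 2 + q ^ 2 := by
    have hy0 := hypos t₀ ht₀
    have hpyth := Real.sin_sq_add_cos_sq (x t₀)
    have hval : p ^ 2 + q ^ 2 = (deriv y t₀) ^ 2 + (y t₀ * deriv x t₀) ^ 2 := by
      have e1 : p = deriv y t₀ * Real.cos (x t₀) - y t₀ * Real.sin (x t₀) * deriv x t₀ := rfl
      have e2 : q = deriv y t₀ * Real.sin (x t₀) + y t₀ * Real.cos (x t₀) * deriv x t₀ := rfl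
      rw [e1, e2]; nlinarith [hpyth]
    have hne2 : deriv x t₀ ≠ 0 ∨ deriv y t₀ ≠ 0 := by
      by_contra hcon
      push_neg at hcon
      exact hreg t₀ ht₀ (by rw [hcon.1, hcon.2])
    rw [hval]
    rcases hne2 with h | h
    · have hne3 : y t₀ * deriv x t₀ ≠ 0 := mul_ne_zero (hyne t₀ ht₀) h
      have h1 : 0 < (y t₀ * deriv x t₀) ^ 2 :=
        lt_of_le_of_ne (sq_nonneg _) (Ne.symm (pow_ne_zero 2 hne3))
      nlinarith [sq_nonneg (deriv y t₀)]
    · have h1 : 0 < (deriv y t₀) ^ 2 :=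
        lt_of_le_of_ne (sq_nonneg _) (Ne.symm (pow_ne_zero 2 h))
      nlinarith [sq_nonneg (y t₀ * deriv x t₀)]
  -- the quantity H = q F - p G is constant
  set H : ℝ → ℝ := fun t => q * (y t * Real.cos (x t)) - p * (y t * Real.sin (x t)) with hHdef
  set k : ℝ := H t₀ with hkdef
  have hHconst : ∀ t ∈ I, H t = k := by
    intro t ht
    refine aux_const_of_deriv_zero hconv hIopen (fun s hs => ?_) t ht t₀ ht₀
    have h1 : HasDerivAt H (q * P s - p * Q s) s :=
      ((hF s hs).const_mul q).sub ((hG s hs).const_mul p)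
    rw [hPconst s hs, hQconst s hs] at h1
    convert h1 using 1; ring
  by_cases hk : k = 0
  · -- degenerate case: line through origin, forces x constant, contradiction
    exfalso
    have h0 : ∀ t ∈ I, q * Real.cos (x t) - p * Real.sin (x t) = 0 := by
      intro t ht
      have hh : q * (y t * Real.cos (x t)) - p * (y t * Real.sin (x t)) = 0 :=
        (hHconst t ht).trans hk
      have hy := hyne t ht
      have hfact : y t * (q * Real.cos (x t) - p * Real.sin (x t)) = 0 := by
        linear_combination hh
      rcases mul_eq_zero.mp hfact with h | h
      · exact absurd h hy
      · exact h
    have hxconst : ∀ t ∈ I, HasDerivAt x 0 t := by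
      intro t ht
      have hg : HasDerivAt (fun s => q * Real.cos (x s) - p * Real.sin (x s))
          (q * (-Real.sin (x t) * deriv x t) - p * (Real.cos (x t) * deriv x t)) t :=
        ((hcosd t ht).const_mul q).sub ((hsind t ht).const_mul p)
      have hzero : HasDerivAt (fun s => q * Real.cos (x s) - p * Real.sin (x s)) 0 t := by
        have hev : (fun s => q * Real.cos (x s) - p * Real.sin (x s)) =ᶠ[𝓝 t]
            (fun _ => (0 : ℝ)) := by
          filter_upwards [hIopen.mem_nhds ht] with s hs using h0 s hs
        exact (hasDerivAt_const t (0 : ℝ)).congr_of_eventuallyEq hev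
      have huniq := hg.unique hzero
      have h1 : deriv x t * (q * Real.sin (x t) + p * Real.cos (x t)) = 0 := by linarith
      have h2 := h0 t ht
      have hpyth := Real.sin_sq_add_cos_sq (x t)
      have hne : q * Real.sin (x t) + p * Real.cos (x t) ≠ 0 := by
        intro hc
        nlinarith [sq_nonneg (q * Real.cos (x t) - p * Real.sin (x t))]
      have hdx : deriv x t = 0 := by
        rcases mul_eq_zero.mp h1 with h | h
        · exact h
        · exact absurd h hne
      rw [← hdx]; exact hxd t ht
    obtain ⟨t₁, ht₁, t₂, ht₂, hne⟩ := hnonvert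
    exact hne (aux_const_of_deriv_zero hconv hIopen hxconst t₁ ht₁ t₂ ht₂)
  · -- main case: the line misses the origin
    set n : ℝ := Real.sqrt (p ^ 2 + q ^ 2) with hndef
    have hn : 0 < n := Real.sqrt_pos.mpr hEpos
    have hn2 : n ^ 2 = p ^ 2 + q ^ 2 := Real.sq_sqrt hEpos.le
    set σ : ℝ := if 0 < k then 1 else -1 with hσdef
    have hσk : σ * k = |k| := by
      rcases lt_or_gt_of_ne hk with h | h
      · rw [hσdef, if_neg (by linarith), abs_of_neg h]; ring
      · rw [hσdef, if_pos h, abs_of_pos h]; ring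
    have hσ2 : σ ^ 2 = 1 := by
      rcases (by by_cases h : 0 < k <;> simp [hσdef, h] : σ = 1 ∨ σ = -1) with h | h <;>
        rw [h] <;> norm_num
    set α : ℝ := |k| / n with hαdef
    have hα : 0 < α := div_pos (abs_pos.mpr hk) hn
    obtain ⟨x₀, hx₀c, hx₀s⟩ := aux_exists_angle (σ * q / n) (-(σ * p) / n) (by
      field_simp
      nlinarith [hn2, hσ2])
    -- key identity: y t * cos (x t - x₀) = α for all t in I
    have key : ∀ t ∈ I, y t * Real.cos (x t - x₀) = α := by
      intro t ht
      rw [Real.cos_sub, hx₀c, hx₀s]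
      have hHt : q * (y t * Real.cos (x t)) - p * (y t * Real.sin (x t)) = k :=
        hHconst t ht
      have hexp : y t * (Real.cos (x t) * (σ * q / n) + Real.sin (x t) * (-(σ * p) / n)) =
          σ / n * (q * (y t * Real.cos (x t)) - p * (y t * Real.sin (x t))) := by ring
      rw [hexp, hHt, hαdef, ← hσk]
      ring
    have hcospos : ∀ t ∈ I, 0 < Real.cos (x t - x₀) := by
      intro t ht
      have h1 := key t ht
      have h2 := hypos t ht
      nlinarith
    -- shift x₀ by an integer multiple of 2π so that x t₀ - x₀ lands in (-π/2, π/2)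
    set m : ℤ := ⌊(x t₀ - x₀ + π) / (2 * π)⌋ with hmdef
    set x₀' : ℝ := x₀ + m * (2 * π) with hx₀'def
    have hcos_shift : ∀ t : ℝ, Real.cos (x t - x₀') = Real.cos (x t - x₀) := by
      intro t
      have : x t - x₀' = x t - x₀ - m * (2 * π) := by rw [hx₀'def]; ring
      rw [this, Real.cos_sub_int_mul_two_pi]
    have key' : ∀ t ∈ I, y t * Real.cos (x t - x₀') = α := by
      intro t ht; rw [hcos_shift]; exact key t ht
    have hcospos' : ∀ t ∈ I, 0 < Real.cos (x t - x₀') := by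
      intro t ht; rw [hcos_shift]; exact hcospos t ht
    have hπ := Real.pi_pos
    have hmem : -π ≤ x t₀ - x₀' ∧ x t₀ - x₀' < π := by
      have hfl : (m : ℝ) ≤ (x t₀ - x₀ + π) / (2 * π) := Int.floor_le _
      have hfl' : (x t₀ - x₀ + π) / (2 * π) < (m : ℝ) + 1 := Int.lt_floor_add_one _
      have h2π : (0:ℝ) < 2 * π := by linarith
      have hA : (m : ℝ) * (2 * π) ≤ x t₀ - x₀ + π := by
        have h3 := mul_le_mul_of_nonneg_right hfl h2π.le
        rw [div_mul_cancel₀ _ h2π.ne'] at h3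
        exact h3
      have hB : x t₀ - x₀ + π < ((m : ℝ) + 1) * (2 * π) := by
        have h3 := mul_lt_mul_of_pos_right hfl' h2π
        rw [div_mul_cancel₀ _ h2π.ne'] at h3
        exact h3
      constructor
      · rw [hx₀'def]; linarith
      · rw [hx₀'def]; nlinarith
    have ht₀abs : |x t₀ - x₀'| < π / 2 :=
      aux_abs_lt_of_cos_pos hmem.1 hmem.2 (hcospos' t₀ ht₀)
    -- connectedness: all of I stays in the same branch
    have hxcont : ContinuousOn (fun t => x t - x₀') I :=
      (hx2.continuousOn).sub continuousOn_const
    have hJconn : IsPreconnected ((fun t => x t - x₀') '' I) :=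
      (hIconn.isPreconnected).image _ hxcont
    have hJord : ((fun t => x t - x₀') '' I).OrdConnected := hJconn.ordConnected
    have habs : ∀ t ∈ I, |x t - x₀'| < π / 2 := by
      intro t ht
      by_contra hcon
      push_neg at hcon
      have hθ₀ : x t₀ - x₀' ∈ (fun t => x t - x₀') '' I := ⟨t₀, ht₀, rfl⟩
      have hθ : x t - x₀' ∈ (fun t => x t - x₀') '' I := ⟨t, ht, rfl⟩
      obtain ⟨hl, hr⟩ := abs_lt.mp ht₀abs
      rcases le_abs.mp hcon with h | h
      · -- x t - x₀' ≥ π/2 : π/2 lies between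
        have hsub := hJord.uIcc_subset hθ₀ hθ
        have hmem2 : π / 2 ∈ uIcc (x t₀ - x₀') (x t - x₀') := by
          rw [mem_uIcc]; left; exact ⟨by linarith, h⟩
        obtain ⟨s, hs, hseq⟩ := hsub hmem2
        have hseq' : x s - x₀' = π / 2 := hseq
        have := hcospos' s hs
        rw [hseq', Real.cos_pi_div_two] at this
        exact lt_irrefl 0 this
      · -- x t - x₀' ≤ -π/2
        have hsub := hJord.uIcc_subset hθ₀ hθ
        have hmem2 : -(π / 2) ∈ uIcc (x t₀ - x₀') (x t - x₀') := by
          rw [mem_uIcc]; right; exact ⟨by linarith, by linarith⟩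
        obtain ⟨s, hs, hseq⟩ := hsub hmem2
        have hseq' : x s - x₀' = -(π / 2) := hseq
        have := hcospos' s hs
        rw [hseq', Real.cos_neg, Real.cos_pi_div_two] at this
        exact lt_irrefl 0 this
    refine ⟨α, hα, x₀', fun t ht => ⟨habs t ht, ?_, ?_⟩⟩
    · have h1 := key' t ht
      have h2 := hcospos' t ht
      rw [eq_div_iff h2.ne']
      exact h1
    · have h1 := key' t ht
      have h2 := hypos t ht
      have h3 : Real.cos (x t - x₀') ≤ 1 := Real.cos_le_one _
      calc α = y t * Real.cos (x t - x₀') := h1.symm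
        _ ≤ y t * 1 := mul_le_mul_of_nonneg_left h3 h2.le
        _ = y t := mul_one _
end
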